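/- Let ρ ≥ 2 + √6, let T ≥ 2 and n ≥ 1 be integers, and let K ⊆ {0,…,T−1} be a set with T−1 ∈ K and min K < T−1. For each k ∈ K let d_k ∈ ℝⁿ be a unit vector and set d_k := 0 for k ∉ K. Define x₀ := 0 and x_{t+1} := ρ x_t + d_t for t = 0,…,T−1. Then the matrix ρ Iₙ is NOT a global minimizer over A ∈ ℝ^{n×n} of the loss g(A) = Σ_{t=0}^{T−1} ‖x_{t+1} − A x_t‖₂; that is, there exists A ∈ ℝ^{n×n} with g(A) < g(ρ Iₙ). -/

import Mathlib

open Matrix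
open scoped BigOperators

noncomputable def e2norm {k : ℕ} (v : Fin k → ℝ) : ℝ := Real.sqrt (∑ i, (v i) ^ 2)

/-!
The competitor is the rank-one update `A = ρ I + d_L x_Lᵀ / ‖x_L‖²` of `ρ I`, where `L = T - 1`.
It fits the last step exactly, saving the cost `‖d_L‖ = 1`, and on an earlier step `t` it changes
the residual `d_t` by a vector of norm at most `‖x_t‖ / ‖x_L‖`. After the first attack the state is
a unit vector, and `‖x_{t+1}‖ ≥ ρ ‖x_t‖ - 1` with `ρ ≥ 3` makes every `‖x_m‖` exceed
`∑_{t<m} ‖x_t‖`; so the total extra cost is below `1`.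
-/

open Finset

theorem one_le_and_sum_range_lt_of_growth {ρ : ℝ} (hρ : 3 ≤ ρ) {a : ℕ → ℝ} {k m : ℕ}
    (hkm : k ≤ m) (hsum : ∑ t ∈ range k, a t = 0) (hk : a k = 1)
    (hgrow : ∀ t, k ≤ t → t < m → ρ * a t - 1 ≤ a (t + 1)) :
    1 ≤ a m ∧ ∑ t ∈ range m, a t < a m := by
  induction m, hkm using Nat.le_induction with
  | base => simp [hsum, hk]
  | succ m hkm ih =>
    obtain ⟨h1, hlt⟩ := ih fun t hkt htm => hgrow t hkt (by omega)
    have := hgrow m hkm (by omega)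
    rw [sum_range_succ]
    constructor <;> nlinarith

theorem eq_zero_of_le_of_inputs_eq_zero {M : Type*} [AddCommGroup M] [Module ℝ M] {ρ : ℝ}
    {x d : ℕ → M} {k : ℕ} (hx0 : x 0 = 0) (hstep : ∀ t < k, x (t + 1) = ρ • x t + d t)
    (hd : ∀ t < k, d t = 0) : ∀ t ≤ k, x t = 0 := by
  intro t ht
  induction t with
  | zero => exact hx0
  | succ t ih => rw [hstep t ht, ih (by omega), hd t ht, smul_zero, add_zero]

section InnerProductSpace

variable {F : Type*} [NormedAddCommGroup F] [InnerProductSpace ℝ F]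

open scoped RealInnerProductSpace

theorem norm_inner_div_sq_smul_le (u v w : F) :
    ‖(⟪u, v⟫ / ‖u‖ ^ 2) • w‖ ≤ ‖v‖ / ‖u‖ * ‖w‖ := by
  rcases eq_or_ne u 0 with rfl | hu
  · simp
  rw [norm_smul, norm_div, norm_pow, norm_norm]
  calc ‖⟪u, v⟫‖ / ‖u‖ ^ 2 * ‖w‖ ≤ ‖u‖ * ‖v‖ / ‖u‖ ^ 2 * ‖w‖ := by
        gcongr
        exact norm_inner_le_norm u v
    _ = ‖v‖ / ‖u‖ * ‖w‖ := by
        field_simp [norm_ne_zero_iff.2 hu]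

theorem exists_linearMap_sum_norm_sub_lt {ρ : ℝ} (hρ : 3 ≤ ρ) {x d : ℕ → F} {k L : ℕ}
    (hkL : k < L) (hx : ∀ t ≤ k, x t = 0) (hdk : ‖d k‖ = 1) (hdL : ‖d L‖ = 1)
    (hd : ∀ t, ‖d t‖ ≤ 1) (hstep : ∀ t ≤ L, x (t + 1) = ρ • x t + d t) :
    ∃ f : F →ₗ[ℝ] F, ∑ t ∈ range (L + 1), ‖x (t + 1) - f (x t)‖ <
      ∑ t ∈ range (L + 1), ‖x (t + 1) - ρ • x t‖ := by
  have hsub : ∀ t ≤ L, x (t + 1) - ρ • x t = d t := fun t ht => by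
    rw [hstep t ht, add_sub_cancel_left]
  obtain ⟨hN, hsum⟩ := one_le_and_sum_range_lt_of_growth hρ (a := fun t => ‖x t‖) hkL
    (sum_eq_zero fun t ht => by simp [hx t (Nat.lt_succ_iff.1 (mem_range.1 ht))])
    (by simp [hstep k hkL.le, hx k le_rfl, hdk])
    fun t _ htL => by
      have h := norm_sub_le (x (t + 1)) (d t)
      rw [← eq_sub_of_add_eq (hstep t htL.le).symm, norm_smul, Real.norm_eq_abs,
        abs_of_nonneg (by linarith)] at h
      linarith [hd t]
  set N := ‖x L‖
  let f : F →ₗ[ℝ] F := ρ • LinearMap.id + ((N ^ 2)⁻¹ • innerₛₗ ℝ (x L)).smulRight (d L)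
  have hres : ∀ t ≤ L, x (t + 1) - f (x t) = d t - (⟪x L, x t⟫ / N ^ 2) • d L := fun t ht => by
    simp [f, hstep t ht, div_eq_inv_mul]
  have hres_last : x (L + 1) - f (x L) = 0 := by
    rw [hres L le_rfl, real_inner_self_eq_norm_sq, div_self (by positivity), one_smul, sub_self]
  have hsum_ρ : ∑ t ∈ range (L + 1), ‖x (t + 1) - ρ • x t‖ = ∑ t ∈ range L, ‖d t‖ + 1 := by
    rw [sum_range_succ, hsub L le_rfl, hdL]
    exact congrArg (· + 1) (sum_congr rfl fun t ht => by rw [hsub t (mem_range.1 ht).le])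
  refine ⟨f, ?_⟩
  rw [hsum_ρ, sum_range_succ, hres_last, norm_zero, add_zero]
  calc ∑ t ∈ range L, ‖x (t + 1) - f (x t)‖ ≤ ∑ t ∈ range L, (‖d t‖ + ‖x t‖ / N) :=
        sum_le_sum fun t ht => by
          rw [hres t (mem_range.1 ht).le]
          have h := norm_inner_div_sq_smul_le (x L) (x t) (d L)
          rw [hdL, mul_one] at h
          exact (norm_sub_le _ _).trans (add_le_add_right h _)
    _ = ∑ t ∈ range L, ‖d t‖ + (∑ t ∈ range L, ‖x t‖) / N := by rw [sum_add_distrib, sum_div]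
    _ < ∑ t ∈ range L, ‖d t‖ + 1 := by
        gcongr
        exact (div_lt_one (by linarith)).2 hsum

end InnerProductSpace

theorem e2norm_eq_norm_toLp {k : ℕ} (v : Fin k → ℝ) : e2norm v = ‖WithLp.toLp 2 v‖ := by
  simp [e2norm, EuclideanSpace.norm_eq]

theorem toLp_mulVec_toLpLin_symm {k : ℕ}
    (f : EuclideanSpace ℝ (Fin k) →ₗ[ℝ] EuclideanSpace ℝ (Fin k)) (v : Fin k → ℝ) :
    WithLp.toLp 2 ((toLpLin 2 2).symm f *ᵥ v) = f (WithLp.toLp 2 v) := by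
  rw [← Matrix.toLin'_apply, ← toLpLin_toLp, LinearEquiv.apply_symm_apply]

theorem unstable_not_global_min_general
    (ρ : ℝ) (hρ : 2 + Real.sqrt 6 ≤ ρ)
    (T n : ℕ)
    (K : Finset ℕ)
    (hlast : T - 1 ∈ K)
    (hmin : K.min' ⟨T - 1, hlast⟩ < T - 1)
    (d : ℕ → (Fin n → ℝ))
    (hd1 : ∀ k ∈ K, e2norm (d k) = 1) (hd0 : ∀ k ∉ K, d k = 0)
    (x : ℕ → (Fin n → ℝ)) (hx0 : x 0 = 0)
    (hxstep : ∀ t < T, x (t + 1) = ρ • x t + d t) :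
    ∃ A : Matrix (Fin n) (Fin n) ℝ,
      ∑ t ∈ Finset.range T, e2norm (x (t + 1) - A.mulVec (x t)) <
        ∑ t ∈ Finset.range T,
          e2norm (x (t + 1) - (ρ • (1 : Matrix (Fin n) (Fin n) ℝ)).mulVec (x t)) := by
  set k := K.min' ⟨T - 1, hlast⟩
  obtain ⟨L, rfl⟩ : ∃ L, T = L + 1 := ⟨T - 1, by omega⟩
  have hL : L ∈ K := by simpa using hlast
  have hkL : k < L := by simpa using hmin
  have hρ3 : 3 ≤ ρ := by
    have : 1 ≤ Real.sqrt 6 := Real.le_sqrt_of_sq_le (by norm_num)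
    linarith
  have hd : ∀ t, e2norm (d t) ≤ 1 := fun t => by
    by_cases ht : t ∈ K
    · exact (hd1 t ht).le
    · simp [hd0 t ht, e2norm]
  have hx : ∀ t ≤ k, x t = 0 := eq_zero_of_le_of_inputs_eq_zero hx0
    (fun t ht => hxstep t (by omega)) fun t ht => hd0 t fun htK => (K.min'_le t htK).not_gt ht
  obtain ⟨f, hf⟩ := exists_linearMap_sum_norm_sub_lt hρ3 (x := fun t => WithLp.toLp 2 (x t))
    (d := fun t => WithLp.toLp 2 (d t)) hkL (fun t ht => by simp [hx t ht])
    (by rw [← e2norm_eq_norm_toLp, hd1 k (K.min'_mem _)])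
    (by rw [← e2norm_eq_norm_toLp, hd1 L hL])
    (fun t => by rw [← e2norm_eq_norm_toLp]; exact hd t)
    fun t ht => by simp [hxstep t (by omega)]
  refine ⟨(toLpLin 2 2).symm f, ?_⟩
  simpa [e2norm_eq_norm_toLp, toLp_mulVec_toLpLin_symm, smul_mulVec, one_mulVec] using hf

/-- failure of exact recovery for unstable linear systems.
Let `ρ ≥ 2 + √6`, `T ≥ 2`, `n ≥ 1`, `K ⊆ {0,…,T−1}` with `T−1 ∈ K` and `min K < T−1`.
With unit attack vectors `d_k` for `k ∈ K` (and `d_k = 0` otherwise), `x₀ = 0`,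
`x_{t+1} = ρ x_t + d_t`, the matrix `ρ Iₙ` is not a global minimizer of
`g(A) = Σ_{t<T} ‖x_{t+1} − A x_t‖₂`. -/
theorem unstable_not_global_min
    (ρ : ℝ) (hρ : 2 + Real.sqrt 6 ≤ ρ)
    (T n : ℕ) (hT : 2 ≤ T) (hn : 1 ≤ n)
    (K : Finset ℕ) (hKsub : K ⊆ Finset.range T)
    (hlast : T - 1 ∈ K)
    (hmin : K.min' ⟨T - 1, hlast⟩ < T - 1)
    (d : ℕ → (Fin n → ℝ))
    (hd1 : ∀ k ∈ K, e2norm (d k) = 1) (hd0 : ∀ k ∉ K, d k = 0)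
    (x : ℕ → (Fin n → ℝ)) (hx0 : x 0 = 0)
    (hxstep : ∀ t < T, x (t + 1) = ρ • x t + d t) :
    ∃ A : Matrix (Fin n) (Fin n) ℝ,
      ∑ t ∈ Finset.range T, e2norm (x (t + 1) - A.mulVec (x t)) <
        ∑ t ∈ Finset.range T,
          e2norm (x (t + 1) - (ρ • (1 : Matrix (Fin n) (Fin n) ℝ)).mulVec (x t)) :=
  unstable_not_global_min_general ρ hρ T n K hlast hmin d hd1 hd0 x hx0 hxstep
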